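/- arXiv:2003.02496 — 6 statements merged into one kernel-verified Lean document; each statement's English description precedes it below -/
import Mathlib

section
/- For each i with 1 ≤ i ≤ n−1, the endomorphism β̃_i of the free group E is bijective, i.e., β̃_i is an automorphism of E. -/
/-! `β̃_i` has an explicit inverse, `e_{i−1,j} ↦ e_{i−1,j}·e_{i,j}`, `e_{i,j} ↦ e_{i,j−1}⁻¹`,
`e_{i+1,j} ↦ e_{i,j−1}·e_{i+1,j}`: both composites fix every generator, for instance
`β̃_i(e_{i−1,j}·e_{i,j}) = e_{i−1,j}·e_{i,j+1}·e_{i,j+1}⁻¹ = e_{i−1,j}`. -/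

/-- The free group `E` on the generators `e_{k,j}`, `k = 0,1,…,n`, `j ∈ ℤ/dℤ`,
of the covering groupoid of the `d`-fold branched cover over a disk with `n`
branch points. -/
abbrev Egrp (n d : ℕ) : Type := FreeGroup (Fin (n + 1) × ZMod d)

/-- The generator `e_{k,j}` of `E` (first index read as a natural number). -/
def eGen (n d : ℕ) (k : ℕ) (j : ZMod d) : Egrp n d :=
  FreeGroup.of ((Fin.ofNat (n + 1) k), j)

/-- The lift `β̃_i` of the half Dehn twist `β_i`, as an endomorphism of the
free group `E`, defined on generators by
`e_{i−1,j} ↦ e_{i−1,j}·e_{i,j+1}`, `e_{i,j} ↦ e_{i,j+1}⁻¹`,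
`e_{i+1,j} ↦ e_{i,j}·e_{i+1,j}`, and fixing all other generators. -/
def betaTilde (n d : ℕ) (i : ℕ) : Egrp n d →* Egrp n d :=
  FreeGroup.lift fun p =>
    if (p.1 : ℕ) + 1 = i then
      FreeGroup.of p * eGen n d i (p.2 + 1)
    else if (p.1 : ℕ) = i then
      (FreeGroup.of (p.1, p.2 + 1))⁻¹
    else if (p.1 : ℕ) = i + 1 then
      eGen n d i p.2 * FreeGroup.of p
    else
      FreeGroup.of p

def betaTildeInv (n d : ℕ) (i : ℕ) : Egrp n d →* Egrp n d :=
  FreeGroup.lift fun p =>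
    if (p.1 : ℕ) + 1 = i then
      FreeGroup.of p * eGen n d i p.2
    else if (p.1 : ℕ) = i then
      (FreeGroup.of (p.1, p.2 - 1))⁻¹
    else if (p.1 : ℕ) = i + 1 then
      eGen n d i (p.2 - 1) * FreeGroup.of p
    else
      FreeGroup.of p

section

variable {n d i k : ℕ} {j : ZMod d}

lemma of_eq_eGen (k : Fin (n + 1)) (j : ZMod d) : FreeGroup.of (k, j) = eGen n d k j := by
  simp [eGen]

lemma eGen_eq_of_le (hk : k ≤ n) : eGen n d k j = FreeGroup.of (⟨k, by omega⟩, j) := by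
  rw [of_eq_eGen]

lemma betaTilde_eGen_pred (hk : k + 1 ≤ n) :
    betaTilde n d (k + 1) (eGen n d k j) = eGen n d k j * eGen n d (k + 1) (j + 1) := by
  simp [betaTilde, eGen_eq_of_le (by omega : k ≤ n)]

lemma betaTilde_eGen_self (hi : i ≤ n) :
    betaTilde n d i (eGen n d i j) = (eGen n d i (j + 1))⁻¹ := by
  simp [betaTilde, eGen_eq_of_le hi]

lemma betaTilde_eGen_succ (hi : i + 1 ≤ n) :
    betaTilde n d i (eGen n d (i + 1) j) = eGen n d i j * eGen n d (i + 1) j := by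
  simp [betaTilde, eGen_eq_of_le hi]
  omega

lemma betaTilde_eGen_of_ne (hk : k ≤ n) (h₁ : k + 1 ≠ i) (h₂ : k ≠ i) (h₃ : k ≠ i + 1) :
    betaTilde n d i (eGen n d k j) = eGen n d k j := by
  simp [betaTilde, eGen_eq_of_le hk, h₁, h₂, h₃]

lemma betaTildeInv_eGen_pred (hk : k + 1 ≤ n) :
    betaTildeInv n d (k + 1) (eGen n d k j) = eGen n d k j * eGen n d (k + 1) j := by
  simp [betaTildeInv, eGen_eq_of_le (by omega : k ≤ n)]

lemma betaTildeInv_eGen_self (hi : i ≤ n) :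
    betaTildeInv n d i (eGen n d i j) = (eGen n d i (j - 1))⁻¹ := by
  simp [betaTildeInv, eGen_eq_of_le hi]

lemma betaTildeInv_eGen_succ (hi : i + 1 ≤ n) :
    betaTildeInv n d i (eGen n d (i + 1) j) = eGen n d i (j - 1) * eGen n d (i + 1) j := by
  simp [betaTildeInv, eGen_eq_of_le hi]
  omega

lemma betaTildeInv_eGen_of_ne (hk : k ≤ n) (h₁ : k + 1 ≠ i) (h₂ : k ≠ i) (h₃ : k ≠ i + 1) :
    betaTildeInv n d i (eGen n d k j) = eGen n d k j := by
  simp [betaTildeInv, eGen_eq_of_le hk, h₁, h₂, h₃]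

lemma betaTilde_comp_betaTildeInv (hi : i ≤ n) :
    (betaTilde n d i).comp (betaTildeInv n d i) = MonoidHom.id _ := by
  refine FreeGroup.ext_hom _ _ fun p => ?_
  obtain ⟨⟨k, hk⟩, j⟩ := p
  rw [MonoidHom.comp_apply, MonoidHom.id_apply, of_eq_eGen]
  by_cases h₁ : k + 1 = i
  · subst h₁
    rw [betaTildeInv_eGen_pred hi, map_mul, betaTilde_eGen_pred hi, betaTilde_eGen_self hi,
      mul_inv_cancel_right]
  by_cases h₂ : k = i
  · subst h₂
    rw [betaTildeInv_eGen_self hi, map_inv, betaTilde_eGen_self hi, sub_add_cancel, inv_inv]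
  by_cases h₃ : k = i + 1
  · subst h₃
    rw [betaTildeInv_eGen_succ (by omega), map_mul, betaTilde_eGen_self hi,
      betaTilde_eGen_succ (by omega), sub_add_cancel, inv_mul_cancel_left]
  · rw [betaTildeInv_eGen_of_ne (by omega) h₁ h₂ h₃, betaTilde_eGen_of_ne (by omega) h₁ h₂ h₃]

lemma betaTildeInv_comp_betaTilde (hi : i ≤ n) :
    (betaTildeInv n d i).comp (betaTilde n d i) = MonoidHom.id _ := by
  refine FreeGroup.ext_hom _ _ fun p => ?_
  obtain ⟨⟨k, hk⟩, j⟩ := p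
  rw [MonoidHom.comp_apply, MonoidHom.id_apply, of_eq_eGen]
  by_cases h₁ : k + 1 = i
  · subst h₁
    rw [betaTilde_eGen_pred hi, map_mul, betaTildeInv_eGen_pred hi, betaTildeInv_eGen_self hi,
      add_sub_cancel_right, mul_inv_cancel_right]
  by_cases h₂ : k = i
  · subst h₂
    rw [betaTilde_eGen_self hi, map_inv, betaTildeInv_eGen_self hi, add_sub_cancel_right, inv_inv]
  by_cases h₃ : k = i + 1
  · subst h₃
    rw [betaTilde_eGen_succ (by omega), map_mul, betaTildeInv_eGen_self hi,
      betaTildeInv_eGen_succ (by omega), inv_mul_cancel_left]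
  · rw [betaTilde_eGen_of_ne (by omega) h₁ h₂ h₃, betaTildeInv_eGen_of_ne (by omega) h₁ h₂ h₃]

end

theorem betaTilde_bijective_general (n d : ℕ) (i : ℕ) (hi2 : i ≤ n - 1) :
    Function.Bijective (betaTilde n d i) :=
  (MonoidHom.toMulEquiv _ _ (betaTildeInv_comp_betaTilde (by omega))
    (betaTilde_comp_betaTildeInv (by omega))).bijective

/-- For each `i` with `1 ≤ i ≤ n−1`, the endomorphism `β̃_i` of the free group
`E` is bijective, i.e. `β̃_i` is an automorphism of `E`. -/
theorem betaTilde_bijective (n d : ℕ) (hn : 2 ≤ n) (hd : 2 ≤ d)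
    (i : ℕ) (hi1 : 1 ≤ i) (hi2 : i ≤ n - 1) :
    Function.Bijective (betaTilde n d i) :=
  betaTilde_bijective_general n d i hi2
end

section
/- The endomorphisms β̃_i satisfy the far commutation relation: for all i, k with 1 ≤ i, k ≤ n−1 and |i − k| ≥ 2, β̃_i ∘ β̃_k = β̃_k ∘ β̃_i as endomorphisms of E. -/
lemma eGen_fst_snd {n d : ℕ} (p : Fin (n + 1) × ZMod d) : eGen n d p.1 p.2 = FreeGroup.of p := by
  simp [eGen]

namespace betaTilde

variable {n d : ℕ}

lemma apply_eGen {a : ℕ} (ha : a ≤ n) (i : ℕ) (j : ZMod d) :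
    betaTilde n d i (eGen n d a j) =
      if a + 1 = i then eGen n d a j * eGen n d i (j + 1)
      else if a = i then (eGen n d a (j + 1))⁻¹
      else if a = i + 1 then eGen n d i j * eGen n d a j
      else eGen n d a j := by
  have hval : ((Fin.ofNat (n + 1) a : Fin (n + 1)) : ℕ) = a := by
    simp [Nat.mod_eq_of_lt (Nat.lt_succ_of_le ha)]
  simp only [betaTilde, eGen, FreeGroup.lift_apply_of, hval]

/-- The supports `{i-1, i, i+1}` and `{k-1, k, k+1}` meet at most in `i + 1 = k - 1`, where
`β̃_i` multiplies by `e_i` on the left and `β̃_k` by `e_k` on the right. -/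
lemma comm_of_add_two_le {i k : ℕ} (hk : k ≤ n) (hik : i + 2 ≤ k) :
    (betaTilde n d i).comp (betaTilde n d k) = (betaTilde n d k).comp (betaTilde n d i) := by
  refine FreeGroup.ext_hom _ _ fun p => ?_
  simp only [← eGen_fst_snd, MonoidHom.comp_apply, apply_eGen (Nat.le_of_lt_succ p.1.2)]
  split_ifs <;>
    simp only [map_mul, map_inv, apply_eGen (Nat.le_of_lt_succ p.1.2), apply_eGen hk,
      apply_eGen (show i ≤ n by omega)] <;>
    split_ifs <;> first | rfl | omega

end betaTilde

theorem betaTilde_far_commutation_general (n d : ℕ)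
    (i k : ℕ) (hi2 : i ≤ n - 1) (hk2 : k ≤ n - 1)
    (hik : i + 2 ≤ k ∨ k + 2 ≤ i) :
    (betaTilde n d i).comp (betaTilde n d k) =
      (betaTilde n d k).comp (betaTilde n d i) := by
  rcases hik with hik | hik
  · exact betaTilde.comm_of_add_two_le (by omega) hik
  · exact (betaTilde.comm_of_add_two_le (by omega) hik).symm

/-- The lifts `β̃_i` satisfy the far commutation relation: for all `i, k` with
`1 ≤ i, k ≤ n−1` and `|i − k| ≥ 2`, `β̃_i ∘ β̃_k = β̃_k ∘ β̃_i`
as endomorphisms of `E`. -/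
theorem betaTilde_far_commutation (n d : ℕ) (hn : 2 ≤ n) (hd : 2 ≤ d)
    (i k : ℕ) (hi1 : 1 ≤ i) (hi2 : i ≤ n - 1) (hk1 : 1 ≤ k) (hk2 : k ≤ n - 1)
    (hik : i + 2 ≤ k ∨ k + 2 ≤ i) :
    (betaTilde n d i).comp (betaTilde n d k) =
      (betaTilde n d k).comp (betaTilde n d i) :=
  betaTilde_far_commutation_general n d i k hi2 hk2 hik
end

section
/- For each i with 1 ≤ i ≤ n−1, the endomorphism T_i of the free group F is bijective, i.e., T_i is an automorphism of F. -/
/-!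
`T_i` is inverted explicitly. Writing `y_{i,m} = x_{i,1}⋯x_{i,m-1}`, `T_i` sends `y_{i,m}` to
`y_{i,m+1}⁻¹·x_{i,1}`, and `y_{i,d+1} = 1` because `x_{i,d}` is defined by `x_{i,1}⋯x_{i,d} = 1`;
hence `y_{i,d} ↦ x_{i,1}`, and the inverse sends `y_{i,m+1}` to `y_{i,d}·y_{i,m}⁻¹`. On rows
`i ± 1`, `T_i` multiplies each generator on both sides by partial products of row `i`, and the inverse
multiplies by their preimages. Both composites are the identity on generators once the two maps are
computed on partial products, each by induction on `m`.
-/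

/-- The free group `F` on the `(d−1)(n−1)` generators `x_{i,j}`,
`i = 1,…,n−1`, `j = 1,…,d−1`. -/
abbrev Fgrp (n d : ℕ) : Type := FreeGroup (Fin (n - 1) × Fin (d - 1))

/-- The element `x_{k,j}` of `F`, with the second index read modulo `d`:
for `j ≡ 1,…,d−1 (mod d)` it is the corresponding generator, and for
`j ≡ 0 (mod d)` (i.e. `j = d`) it is `x_{k,d} := (x_{k,1}·x_{k,2}·…·x_{k,d−1})⁻¹`.
(Junk value `1` outside the valid index ranges.) -/
def X (n d k j : ℕ) : Fgrp n d :=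
  if hk : k - 1 < n - 1 then
    if j % d = 0 then
      ((List.ofFn fun b : Fin (d - 1) =>
        FreeGroup.of ((⟨k - 1, hk⟩ : Fin (n - 1)), b)).prod)⁻¹
    else if hj : j % d - 1 < d - 1 then
      FreeGroup.of ((⟨k - 1, hk⟩ : Fin (n - 1)), (⟨j % d - 1, hj⟩ : Fin (d - 1)))
    else 1
  else 1

/-- The element `y_{k,j} := x_{k,1}·x_{k,2}·…·x_{k,j−1}` of `F`. -/
def Y (n d k j : ℕ) : Fgrp n d :=
  ((List.range (j - 1)).map fun t => X n d k (t + 1)).prod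

/-- The endomorphism `T_i` of the free group `F`, defined on the generators
(with `1 ≤ k ≤ n−1`, `1 ≤ j ≤ d−1`) by
`x_{i−1,j} ↦ x_{i−1,j−1}⁻¹·…·x_{i−1,1}⁻¹·x_{i,j+1}·x_{i−1,1}·…·x_{i−1,j}`,
`x_{i,j} ↦ x_{i,2}·…·x_{i,j}·x_{i,j+1}⁻¹·x_{i,j}⁻¹·…·x_{i,2}⁻¹`,
`x_{i+1,j} ↦ x_{i,j−1}⁻¹·…·x_{i,1}⁻¹·x_{i+1,j}·x_{i,1}·…·x_{i,j}`,
fixing all other generators. -/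
def T (n d : ℕ) (i : ℕ) : Fgrp n d →* Fgrp n d :=
  FreeGroup.lift fun p =>
    let k := (p.1 : ℕ) + 1
    let j := (p.2 : ℕ) + 1
    if k + 1 = i then
      (Y n d k j)⁻¹ * X n d i (j + 1) * Y n d k (j + 1)
    else if k = i then
      (((List.range (j - 1)).map fun t => X n d i (t + 2)).prod) *
        (X n d i (j + 1))⁻¹ *
        (((List.range (j - 1)).map fun t => X n d i (t + 2)).prod)⁻¹
    else if k = i + 1 then
      (Y n d i j)⁻¹ * X n d k j * Y n d i (j + 1)
    else
      FreeGroup.of p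

variable {n d i k j m : ℕ}

theorem X_add_one (hk : k - 1 < n - 1) (hj : j < d - 1) :
    X n d k (j + 1) = FreeGroup.of (⟨k - 1, hk⟩, ⟨j, hj⟩) := by
  have hmod : (j + 1) % d = j + 1 := Nat.mod_eq_of_lt (by omega)
  simp [X, hk, hmod, hj]

theorem X_add_one_add_one (p : Fin (n - 1) × Fin (d - 1)) :
    X n d (p.1 + 1) (p.2 + 1) = FreeGroup.of p :=
  X_add_one (k := p.1 + 1) (by simp) p.2.isLt

theorem Y_one : Y n d k 1 = 1 := rfl

theorem Y_succ (hm : 1 ≤ m) : Y n d k (m + 1) = Y n d k m * X n d k m := by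
  obtain ⟨m, rfl⟩ := Nat.exists_eq_add_of_le' hm
  simp [Y, List.prod_range_succ]

theorem X_self : X n d k d = (Y n d k d)⁻¹ := by
  by_cases hk : k - 1 < n - 1
  · rw [X, dif_pos hk, if_pos (Nat.mod_self d), List.ofFn_eq_map, Y,
      ← List.map_coe_finRange_eq_range, List.map_map]
    congr 2
    exact List.map_congr_left fun b _ => (X_add_one hk b.isLt).symm
  · simp [Y, X, hk]

theorem Y_succ_self (hd : 1 ≤ d) : Y n d k (d + 1) = 1 := by
  rw [Y_succ hd, X_self, mul_inv_cancel]

theorem map_Y_eq_of_succ {G : Type*} [Group G] (φ : Fgrp n d →* G) {M : ℕ} {W : ℕ → G}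
    (h_one : W 1 = 1) (h_succ : ∀ m, 1 ≤ m → m < M → W (m + 1) = W m * φ (X n d k m))
    (hm : 1 ≤ m) (hmM : m ≤ M) : φ (Y n d k m) = W m := by
  induction m, hm using Nat.le_induction with
  | base => rw [Y_one, map_one, h_one]
  | succ m hm ih => rw [Y_succ hm, map_mul, ih (by omega), h_succ m hm (by omega)]

theorem Fgrp.hom_ext {G : Type*} [Group G] {φ ψ : Fgrp n d →* G}
    (h : ∀ k j, 1 ≤ k → k ≤ n - 1 → 1 ≤ j → j ≤ d - 1 → φ (X n d k j) = ψ (X n d k j)) :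
    φ = ψ :=
  FreeGroup.ext_hom _ _ fun p => by
    simpa only [X_add_one_add_one] using h _ _ le_add_self p.1.isLt le_add_self p.2.isLt

theorem lift_X {G : Type*} [Group G] (f : Fin (n - 1) × Fin (d - 1) → G)
    (hk : 1 ≤ k) (hkn : k ≤ n - 1) (hj : 1 ≤ j) (hjd : j ≤ d - 1) :
    FreeGroup.lift f (X n d k j) = f (⟨k - 1, by omega⟩, ⟨j - 1, by omega⟩) := by
  obtain ⟨j, rfl⟩ := Nat.exists_eq_add_of_le' hj
  rw [X_add_one (by omega) (by omega), FreeGroup.lift_apply_of]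
  rfl

theorem T_X_pred (hk : 1 ≤ k) (hkn : k ≤ n - 1) (hj : 1 ≤ j) (hjd : j ≤ d - 1) :
    T n d (k + 1) (X n d k j) = (Y n d k j)⁻¹ * X n d (k + 1) (j + 1) * Y n d k (j + 1) := by
  rw [T, lift_X _ hk hkn hj hjd]
  simp only [Nat.sub_add_cancel hk, Nat.sub_add_cancel hj, if_true]

theorem T_X_self (hi : 1 ≤ i) (hin : i ≤ n - 1) (hj : 1 ≤ j) (hjd : j ≤ d - 1) :
    T n d i (X n d i j) = (X n d i 1)⁻¹ * Y n d i (j + 1) * (X n d i (j + 1))⁻¹ *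
      (Y n d i (j + 1))⁻¹ * X n d i 1 := by
  have hz : ((List.range (j - 1)).map fun t => X n d i (t + 2)).prod =
      (X n d i 1)⁻¹ * Y n d i (j + 1) := by
    obtain ⟨j, rfl⟩ := Nat.exists_eq_add_of_le' hj
    simp [Y, List.prod_range_succ']
  rw [T, lift_X _ hi hin hj hjd]
  simp only [Nat.sub_add_cancel hi, Nat.sub_add_cancel hj, Nat.succ_ne_self, if_false, if_true, hz]
  group

theorem T_X_succ (hin : i + 1 ≤ n - 1) (hj : 1 ≤ j) (hjd : j ≤ d - 1) :
    T n d i (X n d (i + 1) j) = (Y n d i j)⁻¹ * X n d (i + 1) j * Y n d i (j + 1) := by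
  rw [T, lift_X _ (by omega) hin hj hjd]
  simp only [Nat.add_sub_cancel, Nat.sub_add_cancel hj]
  rw [if_neg (by omega), if_neg (by omega), if_pos trivial]

theorem T_X_of_ne (hk : 1 ≤ k) (hkn : k ≤ n - 1) (hj : 1 ≤ j) (hjd : j ≤ d - 1)
    (hpred : k + 1 ≠ i) (hself : k ≠ i) (hsucc : k ≠ i + 1) :
    T n d i (X n d k j) = X n d k j := by
  rw [T, lift_X _ hk hkn hj hjd]
  simp only [Nat.sub_add_cancel hk, Nat.sub_add_cancel hj, if_neg hpred, if_neg hself, if_neg hsucc]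
  rw [← X_add_one_add_one]
  simp only [Nat.sub_add_cancel hk, Nat.sub_add_cancel hj]

theorem T_Y_self (hi : 1 ≤ i) (hin : i ≤ n - 1) (hm : 1 ≤ m) (hmd : m ≤ d) :
    T n d i (Y n d i m) = (Y n d i (m + 1))⁻¹ * X n d i 1 := by
  refine map_Y_eq_of_succ (T n d i) (W := fun m => (Y n d i (m + 1))⁻¹ * X n d i 1) ?_
    (fun m hm hmd => ?_) hm hmd
  · simp [Y_succ le_rfl, Y_one]
  · rw [T_X_self hi hin hm (by omega), Y_succ (k := i) (m := m + 1) (by omega)]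
    group

theorem T_Y_pred (hk : 1 ≤ k) (hkn : k ≤ n - 1) (hm : 1 ≤ m) (hmd : m ≤ d) :
    T n d (k + 1) (Y n d k m) = (X n d (k + 1) 1)⁻¹ * Y n d (k + 1) (m + 1) * Y n d k m := by
  refine map_Y_eq_of_succ (T n d (k + 1))
    (W := fun m => (X n d (k + 1) 1)⁻¹ * Y n d (k + 1) (m + 1) * Y n d k m) ?_
    (fun m hm hmd => ?_) hm hmd
  · simp [Y_succ le_rfl, Y_one]
  · rw [T_X_pred hk hkn hm (by omega), Y_succ (k := k + 1) (m := m + 1) (by omega),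
      Y_succ (k := k) hm]
    group

/-- `T_i⁻¹(y_{i,m}) = y_{i,d}·y_{i,m-1}⁻¹`; the case `m = 1` is separate because `Y` reads
`y_{i,0}` as `1` rather than cyclically as `y_{i,d}`. -/
def TinvY (n d i m : ℕ) : Fgrp n d :=
  if m = 1 then 1 else Y n d i d * (Y n d i (m - 1))⁻¹

def Tinv (n d i : ℕ) : Fgrp n d →* Fgrp n d :=
  FreeGroup.lift fun p =>
    let k := (p.1 : ℕ) + 1
    let j := (p.2 : ℕ) + 1
    if k + 1 = i then
      (Y n d k j)⁻¹ * X n d i j * Y n d k (j + 1)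
    else if k = i then
      (TinvY n d i j)⁻¹ * TinvY n d i (j + 1)
    else if k = i + 1 then
      TinvY n d i j * X n d k j * (TinvY n d i (j + 1))⁻¹
    else
      X n d k j

theorem TinvY_one : TinvY n d i 1 = 1 := rfl

theorem TinvY_succ (hm : 1 ≤ m) : TinvY n d i (m + 1) = Y n d i d * (Y n d i m)⁻¹ := by
  rw [TinvY, if_neg (by omega), Nat.add_sub_cancel]

theorem Tinv_X_pred (hk : 1 ≤ k) (hkn : k ≤ n - 1) (hj : 1 ≤ j) (hjd : j ≤ d - 1) :
    Tinv n d (k + 1) (X n d k j) = (Y n d k j)⁻¹ * X n d (k + 1) j * Y n d k (j + 1) := by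
  rw [Tinv, lift_X _ hk hkn hj hjd]
  simp only [Nat.sub_add_cancel hk, Nat.sub_add_cancel hj, if_true]

theorem Tinv_X_self (hi : 1 ≤ i) (hin : i ≤ n - 1) (hj : 1 ≤ j) (hjd : j ≤ d - 1) :
    Tinv n d i (X n d i j) = (TinvY n d i j)⁻¹ * TinvY n d i (j + 1) := by
  rw [Tinv, lift_X _ hi hin hj hjd]
  simp only [Nat.sub_add_cancel hi, Nat.sub_add_cancel hj, Nat.succ_ne_self, if_false, if_true]

theorem Tinv_X_succ (hin : i + 1 ≤ n - 1) (hj : 1 ≤ j) (hjd : j ≤ d - 1) :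
    Tinv n d i (X n d (i + 1) j) = TinvY n d i j * X n d (i + 1) j * (TinvY n d i (j + 1))⁻¹ := by
  rw [Tinv, lift_X _ (by omega) hin hj hjd]
  simp only [Nat.add_sub_cancel, Nat.sub_add_cancel hj]
  rw [if_neg (by omega), if_neg (by omega), if_pos trivial]

theorem Tinv_X_of_ne (hk : 1 ≤ k) (hkn : k ≤ n - 1) (hj : 1 ≤ j) (hjd : j ≤ d - 1)
    (hpred : k + 1 ≠ i) (hself : k ≠ i) (hsucc : k ≠ i + 1) :
    Tinv n d i (X n d k j) = X n d k j := by
  rw [Tinv, lift_X _ hk hkn hj hjd]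
  simp only [Nat.sub_add_cancel hk, Nat.sub_add_cancel hj, if_neg hpred, if_neg hself, if_neg hsucc]

theorem Tinv_Y_self (hi : 1 ≤ i) (hin : i ≤ n - 1) (hm : 1 ≤ m) (hmd : m ≤ d) :
    Tinv n d i (Y n d i m) = TinvY n d i m :=
  map_Y_eq_of_succ (Tinv n d i) TinvY_one
    (fun m hm hmd => by rw [Tinv_X_self hi hin hm (by omega), mul_inv_cancel_left]) hm hmd

theorem Tinv_X_self_of_le (hi : 1 ≤ i) (hin : i ≤ n - 1) (hj : 1 ≤ j) (hjd : j ≤ d) :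
    Tinv n d i (X n d i j) = (TinvY n d i j)⁻¹ * TinvY n d i (j + 1) := by
  rcases Nat.lt_or_eq_of_le hjd with hjd | rfl
  · exact Tinv_X_self hi hin hj (by omega)
  · rw [X_self, map_inv, Tinv_Y_self hi hin hj le_rfl, TinvY_succ hj, mul_inv_cancel, mul_one]

theorem Tinv_Y_pred (hk : 1 ≤ k) (hkn : k ≤ n - 1) (hm : 1 ≤ m) (hmd : m ≤ d) :
    Tinv n d (k + 1) (Y n d k m) = Y n d (k + 1) m * Y n d k m := by
  refine map_Y_eq_of_succ (Tinv n d (k + 1)) (W := fun m => Y n d (k + 1) m * Y n d k m)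
    (by simp [Y_one]) (fun m hm hmd => ?_) hm hmd
  rw [Tinv_X_pred hk hkn hm (by omega), Y_succ hm, Y_succ hm]
  group

theorem T_TinvY (hi : 1 ≤ i) (hin : i ≤ n - 1) (hm : 1 ≤ m) (hmd : m ≤ d + 1) :
    T n d i (TinvY n d i m) = Y n d i m := by
  rcases Nat.eq_or_lt_of_le hm with rfl | hm
  · rw [TinvY_one, map_one, Y_one]
  obtain ⟨m, rfl⟩ := Nat.exists_eq_add_of_le' hm
  rw [TinvY_succ (by omega), map_mul, map_inv, T_Y_self hi hin (by omega) le_rfl,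
    T_Y_self hi hin (by omega) (by omega), Y_succ_self (by omega)]
  group

theorem T_Tinv_X_pred (hk : 1 ≤ k) (hkn : k + 1 ≤ n - 1) (hj : 1 ≤ j) (hjd : j ≤ d - 1) :
    T n d (k + 1) (Tinv n d (k + 1) (X n d k j)) = X n d k j := by
  rw [Tinv_X_pred hk (by omega) hj hjd, map_mul, map_mul, map_inv,
    T_Y_pred hk (by omega) hj (by omega), T_Y_pred hk (by omega) (by omega) (by omega),
    T_X_self (by omega) hkn hj hjd, Y_succ (k := k + 1) (m := j + 1) (by omega),
    Y_succ (k := k) hj]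
  group

theorem T_Tinv_X_self (hi : 1 ≤ i) (hin : i ≤ n - 1) (hj : 1 ≤ j) (hjd : j ≤ d - 1) :
    T n d i (Tinv n d i (X n d i j)) = X n d i j := by
  rw [Tinv_X_self hi hin hj hjd, map_mul, map_inv, T_TinvY hi hin hj (by omega),
    T_TinvY hi hin (by omega) (by omega), Y_succ hj, inv_mul_cancel_left]

theorem T_Tinv_X_succ (hi : 1 ≤ i) (hin : i + 1 ≤ n - 1) (hj : 1 ≤ j) (hjd : j ≤ d - 1) :
    T n d i (Tinv n d i (X n d (i + 1) j)) = X n d (i + 1) j := by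
  rw [Tinv_X_succ hin hj hjd, map_mul, map_mul, map_inv, T_TinvY hi (by omega) hj (by omega),
    T_TinvY hi (by omega) (by omega) (by omega), T_X_succ hin hj hjd]
  group

theorem Tinv_T_X_pred (hk : 1 ≤ k) (hkn : k + 1 ≤ n - 1) (hj : 1 ≤ j) (hjd : j ≤ d - 1) :
    Tinv n d (k + 1) (T n d (k + 1) (X n d k j)) = X n d k j := by
  rw [T_X_pred hk (by omega) hj hjd, map_mul, map_mul, map_inv,
    Tinv_Y_pred hk (by omega) hj (by omega), Tinv_Y_pred hk (by omega) (by omega) (by omega),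
    Tinv_X_self_of_le (by omega) hkn (by omega) (by omega), TinvY_succ hj,
    TinvY_succ (m := j + 1) (by omega), Y_succ (k := k) hj]
  group

theorem Tinv_T_X_self (hi : 1 ≤ i) (hin : i ≤ n - 1) (hj : 1 ≤ j) (hjd : j ≤ d - 1) :
    Tinv n d i (T n d i (X n d i j)) = X n d i j := by
  rw [T_X_self hi hin hj hjd]
  simp only [map_mul, map_inv]
  rw [Tinv_X_self_of_le hi hin le_rfl (by omega), Tinv_Y_self hi hin (by omega) (by omega),
    Tinv_X_self_of_le hi hin (by omega) (by omega), TinvY_one, TinvY_succ le_rfl,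
    TinvY_succ hj, TinvY_succ (m := j + 1) (by omega), Y_one, Y_succ hj]
  group

theorem Tinv_T_X_succ (hi : 1 ≤ i) (hin : i + 1 ≤ n - 1) (hj : 1 ≤ j) (hjd : j ≤ d - 1) :
    Tinv n d i (T n d i (X n d (i + 1) j)) = X n d (i + 1) j := by
  rw [T_X_succ hin hj hjd, map_mul, map_mul, map_inv, Tinv_Y_self hi (by omega) hj (by omega),
    Tinv_Y_self hi (by omega) (by omega) (by omega), Tinv_X_succ hin hj hjd]
  group

theorem T_comp_Tinv (hi : 1 ≤ i) (hin : i ≤ n - 1) :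
    (T n d i).comp (Tinv n d i) = MonoidHom.id _ := by
  refine Fgrp.hom_ext fun k j hk hkn hj hjd => ?_
  rw [MonoidHom.comp_apply, MonoidHom.id_apply]
  by_cases hpred : k + 1 = i
  · subst hpred; exact T_Tinv_X_pred hk hin hj hjd
  by_cases hself : k = i
  · subst hself; exact T_Tinv_X_self hk hkn hj hjd
  by_cases hsucc : k = i + 1
  · subst hsucc; exact T_Tinv_X_succ hi hkn hj hjd
  rw [Tinv_X_of_ne hk hkn hj hjd hpred hself hsucc, T_X_of_ne hk hkn hj hjd hpred hself hsucc]

theorem Tinv_comp_T (hi : 1 ≤ i) (hin : i ≤ n - 1) :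
    (Tinv n d i).comp (T n d i) = MonoidHom.id _ := by
  refine Fgrp.hom_ext fun k j hk hkn hj hjd => ?_
  rw [MonoidHom.comp_apply, MonoidHom.id_apply]
  by_cases hpred : k + 1 = i
  · subst hpred; exact Tinv_T_X_pred hk hin hj hjd
  by_cases hself : k = i
  · subst hself; exact Tinv_T_X_self hk hkn hj hjd
  by_cases hsucc : k = i + 1
  · subst hsucc; exact Tinv_T_X_succ hi hkn hj hjd
  rw [T_X_of_ne hk hkn hj hjd hpred hself hsucc, Tinv_X_of_ne hk hkn hj hjd hpred hself hsucc]

theorem T_bijective_general (n d : ℕ) (i : ℕ) (hi1 : 1 ≤ i) (hi2 : i ≤ n - 1) :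
    Function.Bijective (T n d i) :=
  (MonoidHom.toMulEquiv _ _ (Tinv_comp_T hi1 hi2) (T_comp_Tinv hi1 hi2)).bijective

/-- For each `i` with `1 ≤ i ≤ n−1`, the endomorphism `T_i` of the free group
`F` is bijective, i.e. `T_i` is an automorphism of `F`. -/
theorem T_bijective (n d : ℕ) (hn : 2 ≤ n) (hd : 2 ≤ d)
    (i : ℕ) (hi1 : 1 ≤ i) (hi2 : i ≤ n - 1) :
    Function.Bijective (T n d i) :=
  T_bijective_general n d i hi1 hi2
end

section
/- The endomorphisms T_i satisfy the far commutation relation: for all i, k with 1 ≤ i, k ≤ n−1 and |i − k| ≥ 2, T_i ∘ T_k = T_k ∘ T_i as endomorphisms of F. -/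
/-! `T_i` fixes every generator outside the rows `i - 1`, `i`, `i + 1` and sends a generator of
row `r` to a word in the rows `r` and `i`. So for `i + 2 ≤ k`, on each generator one of `T_i`,
`T_k` fixes both the generator and its image under the other, except on row `i + 1` when
`k = i + 2`. There the products `y_{r,j} = x_{r,1} ⋯ x_{r,j-1}` telescope,
`T_i y_{i+1,j} = y_{i+1,j} y_{i,j}`, and both composites send `x_{i+1,j}` to
`y_{i,j}⁻¹ y_{i+1,j}⁻¹ x_{i+2,j+1} y_{i+1,j+1} y_{i,j+1}`. -/

variable {n d : ℕ}

def rowSubgroup (n d r : ℕ) : Subgroup (Fgrp n d) :=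
  Subgroup.closure (Set.range (X n d r))

lemma of_eq_X (p : Fin (n - 1) × Fin (d - 1)) : FreeGroup.of p = X n d (p.1 + 1) (p.2 + 1) := by
  obtain ⟨⟨a, ha⟩, ⟨b, hb⟩⟩ := p
  have hmod : (b + 1) % d = b + 1 := Nat.mod_eq_of_lt (by omega)
  simp [X, hmod, ha, hb]

lemma X_mem_rowSubgroup (r m : ℕ) : X n d r m ∈ rowSubgroup n d r :=
  Subgroup.subset_closure ⟨m, rfl⟩

lemma prod_map_X_mem_rowSubgroup (r : ℕ) (L : List ℕ) (f : ℕ → ℕ) :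
    (L.map fun t => X n d r (f t)).prod ∈ rowSubgroup n d r :=
  list_prod_mem <| by
    simp only [List.forall_mem_map]
    exact fun t _ => X_mem_rowSubgroup r (f t)

lemma Y_mem_rowSubgroup (r m : ℕ) : Y n d r m ∈ rowSubgroup n d r :=
  prod_map_X_mem_rowSubgroup r _ _

lemma Y_add_two (r m : ℕ) : Y n d r (m + 2) = Y n d r (m + 1) * X n d r (m + 1) := by
  simp [Y, List.range_succ]

lemma T_of_mem_rowSubgroup_sup (i : ℕ) (p : Fin (n - 1) × Fin (d - 1)) :
    T n d i (FreeGroup.of p) ∈ rowSubgroup n d (p.1 + 1) ⊔ rowSubgroup n d i := by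
  have hR : rowSubgroup n d (p.1 + 1) ≤ rowSubgroup n d (p.1 + 1) ⊔ rowSubgroup n d i :=
    le_sup_left
  have hI : rowSubgroup n d i ≤ rowSubgroup n d (p.1 + 1) ⊔ rowSubgroup n d i := le_sup_right
  rw [T, FreeGroup.lift_apply_of]
  dsimp only
  split_ifs
  · exact mul_mem (mul_mem (inv_mem (hR (Y_mem_rowSubgroup _ _))) (hI (X_mem_rowSubgroup _ _)))
      (hR (Y_mem_rowSubgroup _ _))
  · exact mul_mem (mul_mem (hI (prod_map_X_mem_rowSubgroup _ _ _))
      (inv_mem (hI (X_mem_rowSubgroup _ _)))) (inv_mem (hI (prod_map_X_mem_rowSubgroup _ _ _)))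
  · exact mul_mem (mul_mem (inv_mem (hI (Y_mem_rowSubgroup _ _))) (hR (X_mem_rowSubgroup _ _)))
      (hI (Y_mem_rowSubgroup _ _))
  · exact of_eq_X p ▸ hR (X_mem_rowSubgroup _ _)

lemma T_of_of_far {i : ℕ} {p : Fin (n - 1) × Fin (d - 1)}
    (hpi : (p.1 : ℕ) + 1 + 2 ≤ i ∨ i + 2 ≤ (p.1 : ℕ) + 1) :
    T n d i (FreeGroup.of p) = FreeGroup.of p := by
  have h₁ : (p.1 : ℕ) + 1 + 1 ≠ i := by omega
  have h₂ : (p.1 : ℕ) + 1 ≠ i := by omega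
  have h₃ : (p.1 : ℕ) ≠ i := by omega
  simp [T, h₁, h₂, h₃]

section Far

variable {i r : ℕ} (hri : r + 2 ≤ i ∨ i + 2 ≤ r)
include hri

-- Truncated subtraction makes `X n d 0 = X n d 1`: "row 0" is row 1.
lemma T_X_of_far (hr : 1 ≤ r) (m : ℕ) : T n d i (X n d r m) = X n d r m := by
  have hgen : ∀ (b : Fin (d - 1)) (hk : r - 1 < n - 1),
      T n d i (FreeGroup.of (⟨r - 1, hk⟩, b)) = FreeGroup.of (⟨r - 1, hk⟩, b) :=
    fun _ _ => T_of_of_far (by simp; omega)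
  unfold X
  split_ifs
  · simp only [map_inv, map_list_prod, List.map_ofFn, Function.comp_def, hgen]
  · exact hgen _ _
  all_goals exact map_one _

lemma rowSubgroup_le_eqLocus (hr : 1 ≤ r) :
    rowSubgroup n d r ≤ (T n d i).eqLocus (MonoidHom.id _) :=
  (Subgroup.closure_le _).2 <| by
    rintro _ ⟨m, rfl⟩
    exact T_X_of_far hri hr m

lemma T_Y_of_far (hr : 1 ≤ r) (m : ℕ) : T n d i (Y n d r m) = Y n d r m :=
  rowSubgroup_le_eqLocus hri hr (Y_mem_rowSubgroup r m)

lemma T_apply_of_mem_sup {s : ℕ} (hr : 1 ≤ r) (hs : 1 ≤ s) (hsi : s + 2 ≤ i ∨ i + 2 ≤ s)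
    {x : Fgrp n d} (hx : x ∈ rowSubgroup n d r ⊔ rowSubgroup n d s) : T n d i x = x :=
  sup_le (rowSubgroup_le_eqLocus hri hr) (rowSubgroup_le_eqLocus hsi hs) hx

end Far

section Adjacent

variable {i : ℕ} (hi : i < n - 1)
include hi

lemma T_X_succ_row {b : ℕ} (hb : b < d - 1) :
    T n d i (X n d (i + 1) (b + 1)) =
      (Y n d i (b + 1))⁻¹ * X n d (i + 1) (b + 1) * Y n d i (b + 2) := by
  have e₁ : i + 1 + 1 ≠ i := by omega
  have hX := of_eq_X (n := n) (d := d) (⟨i, hi⟩, ⟨b, hb⟩)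
  rw [← hX]
  simp [T, e₁, ← hX]

lemma T_X_prev_row {b : ℕ} (hb : b < d - 1) :
    T n d (i + 2) (X n d (i + 1) (b + 1)) =
      (Y n d (i + 1) (b + 1))⁻¹ * X n d (i + 2) (b + 2) * Y n d (i + 1) (b + 2) := by
  rw [← of_eq_X (⟨i, hi⟩, ⟨b, hb⟩)]
  simp [T]

lemma T_Y_succ_row (m : ℕ) (hm : m ≤ d - 1) :
    T n d i (Y n d (i + 1) (m + 1)) = Y n d (i + 1) (m + 1) * Y n d i (m + 1) := by
  induction m with
  | zero => simp [Y]
  | succ m ih =>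
    rw [Y_add_two, map_mul, ih (by omega), T_X_succ_row hi (by omega), Y_add_two]
    group

lemma T_T_add_two_X_comm (hi₁ : 1 ≤ i) {b : ℕ} (hb : b < d - 1) :
    T n d i (T n d (i + 2) (X n d (i + 1) (b + 1))) =
      T n d (i + 2) (T n d i (X n d (i + 1) (b + 1))) := by
  rw [T_X_prev_row hi hb, T_X_succ_row hi hb, map_mul, map_mul, map_inv, map_mul, map_mul,
    map_inv,
    T_Y_succ_row hi b (by omega), T_Y_succ_row hi (b + 1) (by omega),
    T_X_of_far (by omega) (by omega),
    T_X_prev_row hi hb, T_Y_of_far (by omega) hi₁,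
    T_Y_of_far (by omega) hi₁]
  group

end Adjacent

theorem T_comp_T_of_add_two_le {i k : ℕ} (hi : 1 ≤ i) (hik : i + 2 ≤ k) :
    (T n d i).comp (T n d k) = (T n d k).comp (T n d i) := by
  refine FreeGroup.ext_hom _ _ fun p => ?_
  obtain ⟨⟨a, ha⟩, ⟨b, hb⟩⟩ := p
  simp only [MonoidHom.comp_apply]
  by_cases hak : a + 1 + 2 ≤ k ∨ k + 2 ≤ a + 1
  · rw [T_of_of_far hak, T_apply_of_mem_sup hak (by omega) hi (by omega)
      (T_of_mem_rowSubgroup_sup i (⟨a, ha⟩, ⟨b, hb⟩))]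
  by_cases hai : a = i
  · obtain ⟨rfl, rfl⟩ : a = i ∧ k = i + 2 := by omega
    rw [of_eq_X]
    exact T_T_add_two_X_comm ha hi hb
  · have hai' : a + 1 + 2 ≤ i ∨ i + 2 ≤ a + 1 := by omega
    rw [T_of_of_far (i := i) hai',
      T_apply_of_mem_sup hai' (by omega) (by omega) (by omega)
        (T_of_mem_rowSubgroup_sup k (⟨a, ha⟩, ⟨b, hb⟩))]

theorem T_far_commutation_general (n d : ℕ)
    (i k : ℕ) (hi1 : 1 ≤ i) (hk1 : 1 ≤ k)
    (hik : i + 2 ≤ k ∨ k + 2 ≤ i) :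
    (T n d i).comp (T n d k) = (T n d k).comp (T n d i) := by
  rcases hik with h | h
  · exact T_comp_T_of_add_two_le hi1 h
  · exact (T_comp_T_of_add_two_le hk1 h).symm

/-- The endomorphisms `T_i` satisfy the far commutation relation: for all
`i, k` with `1 ≤ i, k ≤ n−1` and `|i − k| ≥ 2`, `T_i ∘ T_k = T_k ∘ T_i`
as endomorphisms of `F`. -/
theorem T_far_commutation (n d : ℕ) (hn : 2 ≤ n) (hd : 2 ≤ d)
    (i k : ℕ) (hi1 : 1 ≤ i) (hi2 : i ≤ n - 1) (hk1 : 1 ≤ k) (hk2 : k ≤ n - 1)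
    (hik : i + 2 ≤ k ∨ k + 2 ≤ i) :
    (T n d i).comp (T n d k) = (T n d k).comp (T n d i) :=
  T_far_commutation_general n d i k hi1 hk1 hik
end

section
/- There exists a group homomorphism φ_d from the braid group B_n to the automorphism group Aut(F) of the free group F of rank (d−1)(n−1) such that φ_d(σ_i) equals the automorphism T_i for each i = 1, …, n−1. -/
/-- The braid relations on the generators `σ_1, …, σ_m` (indexed by `Fin m`,
where the generator of index `a` is `σ_{a+1}`): `σ_aσ_bσ_a = σ_bσ_aσ_b` for
adjacent indices and `σ_aσ_b = σ_bσ_a` for far apart indices. -/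
def braidRels (m : ℕ) : Set (FreeGroup (Fin m)) :=
  {r | (∃ a b : Fin m, (a : ℕ) + 1 = (b : ℕ) ∧
          r = FreeGroup.of a * FreeGroup.of b * FreeGroup.of a *
                (FreeGroup.of b * FreeGroup.of a * FreeGroup.of b)⁻¹) ∨
       (∃ a b : Fin m, (a : ℕ) + 2 ≤ (b : ℕ) ∧
          r = FreeGroup.of a * FreeGroup.of b * (FreeGroup.of b * FreeGroup.of a)⁻¹)}

/-- The braid group `B_n` on `n` strands, presented with generators
`σ_1, …, σ_{n−1}` and the braid relations. -/
abbrev BraidGroup (n : ℕ) : Type := PresentedGroup (braidRels (n - 1))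

/-!
Work with the partial products `y_{k,e} = x_{k,1}⋯x_{k,e−1}`, the index `e` read modulo `d`
(so `y_{k,1} = y_{k,d+1} = 1`). Since `x_{k,e} = y_{k,e}⁻¹ y_{k,e+1}`, a homomorphism out of `F`
is the same as an assignment of images to the `y_{k,e}` sending `y_{k,1}` to `1`. In these
coordinates `T_i` reads
`y_{i−1,e} ↦ y_{i,2}⁻¹ y_{i,e+1} y_{i−1,e}`, `y_{i,e} ↦ y_{i,e+1}⁻¹ y_{i,2}`,
`y_{i+1,e} ↦ y_{i+1,e} y_{i,e}`,
which has an inverse of the same shape, and the braid relations become identities between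
short words in the `y`'s, checked row by row.
-/

namespace BraidRep

variable {n d k : ℕ}

theorem Y_one : Y n d k 1 = 1 := by simp [Y]

theorem Y_succ {j : ℕ} (hj : 1 ≤ j) : Y n d k (j + 1) = Y n d k j * X n d k j := by
  obtain ⟨m, rfl⟩ := Nat.exists_eq_add_of_le hj
  simp [Y, Nat.add_comm 1 m, List.range_succ]

theorem X_mod (j : ℕ) : X n d k (j % d) = X n d k j := by
  simp [X]

theorem X_zero : X n d k 0 = (Y n d k d)⁻¹ := by
  by_cases hk : k - 1 < n - 1
  · simp only [X, hk, dif_pos, Nat.zero_mod, if_pos, Y]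
    congr 2
    refine List.ext_getElem (by simp) fun t h1 _ => ?_
    have ht : t < d - 1 := by simpa using h1
    simp only [List.getElem_ofFn, List.getElem_map, List.getElem_range,
      Nat.mod_eq_of_lt (show t + 1 < d by omega)]
    rw [if_neg (by omega), dif_pos (by omega)]
    simp
  · simp [X, Y, hk]

theorem X_of {j : ℕ} (hk1 : 1 ≤ k) (hk : k ≤ n - 1) (hj1 : 1 ≤ j) (hj : j < d) :
    X n d k j = FreeGroup.of (⟨k - 1, by omega⟩, ⟨j - 1, by omega⟩) := by
  simp only [X, dif_pos (show k - 1 < n - 1 by omega), Nat.mod_eq_of_lt hj]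
  rw [if_neg (by omega), dif_pos (by omega)]

theorem of_eq_X (p : Fin (n - 1) × Fin (d - 1)) :
    FreeGroup.of p = X n d ((p.1 : ℕ) + 1) ((p.2 : ℕ) + 1) := by
  obtain ⟨⟨a, ha⟩, ⟨b, hb⟩⟩ := p
  rw [X_of (by omega) (by omega) (by omega) (by omega)]
  rfl

/-- `Y` with the second index read in `ZMod d`, through the representatives `1, …, d`:
`Ymod k 1 = 1` and `Ymod k 0 = Y k d = x_{k,1}⋯x_{k,d−1}`. -/
def Ymod (n d k : ℕ) (e : ZMod d) : Fgrp n d := Y n d k ((e - 1).val + 1)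

theorem Ymod_one : Ymod n d k 1 = 1 := by simp [Ymod, Y_one]

theorem Ymod_natCast {j : ℕ} (hj1 : 1 ≤ j) (hj : j ≤ d) : Ymod n d k j = Y n d k j := by
  have hcast : ((j : ZMod d) - 1) = ((j - 1 : ℕ) : ZMod d) := by
    rw [Nat.cast_sub hj1, Nat.cast_one]
  rw [Ymod, hcast, ZMod.val_natCast, Nat.mod_eq_of_lt (by omega), Nat.sub_add_cancel hj1]

theorem Ymod_natCast_add_one [NeZero d] (j : ℕ) :
    Ymod n d k (j + 1) = Ymod n d k j * X n d k j := by
  rw [← X_mod, ← ZMod.natCast_mod j d]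
  have hjd : j % d < d := Nat.mod_lt _ (NeZero.pos d)
  rcases Nat.eq_zero_or_pos (j % d) with h0 | hpos
  · rw [h0, Nat.cast_zero, zero_add, Ymod_one, X_zero, ← ZMod.natCast_self,
      Ymod_natCast (NeZero.one_le) le_rfl, mul_inv_cancel]
  · rw [← Nat.cast_succ, Ymod_natCast (by omega) hjd, Ymod_natCast hpos hjd.le, Y_succ hpos]

theorem X_eq_Ymod [NeZero d] (j : ℕ) :
    X n d k j = (Ymod n d k j)⁻¹ * Ymod n d k (j + 1) := by
  rw [Ymod_natCast_add_one, inv_mul_cancel_left]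

theorem map_Ymod_eq [NeZero d] {G : Type*} [Group G] (f : Fgrp n d →* G) (R : ZMod d → G)
    (h1 : R 1 = 1) (hX : ∀ j : ℕ, 1 ≤ j → j < d → f (X n d k j) = (R j)⁻¹ * R (j + 1))
    (e : ZMod d) : f (Ymod n d k e) = R e := by
  have key : ∀ j < d, f (Ymod n d k (j + 1)) = R (j + 1) := by
    intro j hj
    induction j with
    | zero => simp [Ymod_one, h1]
    | succ j ih =>
      have hcast : ((j + 1 : ℕ) : ZMod d) = (j : ZMod d) + 1 := Nat.cast_succ j
      rw [Ymod_natCast_add_one, map_mul, hcast, ih (by omega), ← hcast,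
        hX _ (by omega) hj, mul_inv_cancel_left]
  simpa using key (e - 1).val (ZMod.val_lt _)

theorem hom_ext_X {G : Type*} [Group G] {f g : Fgrp n d →* G}
    (h : ∀ k j, 1 ≤ k → k ≤ n - 1 → 1 ≤ j → j < d → f (X n d k j) = g (X n d k j)) :
    f = g := by
  refine FreeGroup.ext_hom _ _ fun p => ?_
  have hk : (p.1 : ℕ) + 1 ≤ n - 1 := p.1.isLt
  have hj : (p.2 : ℕ) + 1 < d := by have := p.2.isLt; omega
  rw [of_eq_X]
  exact h _ _ le_add_self hk le_add_self hj

theorem hom_ext_Ymod [NeZero d] {G : Type*} [Group G] {f g : Fgrp n d →* G}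
    (h : ∀ k, 1 ≤ k → k ≤ n - 1 → ∀ e, f (Ymod n d k e) = g (Ymod n d k e)) : f = g :=
  hom_ext_X fun k j hk1 hk _ _ => by
    rw [X_eq_Ymod, map_mul, map_mul, map_inv, map_inv, h k hk1 hk, h k hk1 hk]

def liftYmod {G : Type*} [Group G] (ρ : ℕ → ZMod d → G) : Fgrp n d →* G :=
  FreeGroup.lift fun p => (ρ (p.1 + 1) (p.2 + 1))⁻¹ * ρ (p.1 + 1) (p.2 + 1 + 1)

theorem liftYmod_X {G : Type*} [Group G] {ρ : ℕ → ZMod d → G} {j : ℕ}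
    (hk1 : 1 ≤ k) (hk : k ≤ n - 1) (hj1 : 1 ≤ j) (hj : j < d) :
    liftYmod ρ (X n d k j) = (ρ k j)⁻¹ * ρ k (j + 1) := by
  rw [X_of hk1 hk hj1 hj, liftYmod, FreeGroup.lift_apply_of]
  simp only [Nat.sub_add_cancel hk1, Nat.cast_pred hj1, sub_add_cancel]

theorem liftYmod_Ymod [NeZero d] {G : Type*} [Group G] {ρ : ℕ → ZMod d → G} (hρ : ρ k 1 = 1)
    (hk1 : 1 ≤ k) (hk : k ≤ n - 1) (e : ZMod d) : liftYmod ρ (Ymod n d k e) = ρ k e :=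
  map_Ymod_eq _ _ hρ (fun _ hj1 hj => liftYmod_X hk1 hk hj1 hj) e

theorem prod_X_add_two {j : ℕ} (hj : 1 ≤ j) :
    ((List.range (j - 1)).map fun t => X n d k (t + 2)).prod =
      (X n d k 1)⁻¹ * Y n d k (j + 1) := by
  obtain ⟨m, rfl⟩ := Nat.exists_eq_add_of_le' hj
  simp [Y, List.range_succ_eq_map, Function.comp_def]

theorem T_eq_liftYmod [NeZero d] (i : ℕ) : T n d i = liftYmod fun k e =>
    if k + 1 = i then (Ymod n d i 2)⁻¹ * Ymod n d i (e + 1) * Ymod n d k e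
    else if k = i then (Ymod n d i (e + 1))⁻¹ * Ymod n d i 2
    else if k = i + 1 then Ymod n d k e * Ymod n d i e
    else Ymod n d k e := by
  refine hom_ext_X fun k j hk1 hk hj1 hj => ?_
  have hY : ∀ k', Y n d k' j = Ymod n d k' j := fun k' => (Ymod_natCast hj1 hj.le).symm
  have hY' : ∀ k', Y n d k' (j + 1) = Ymod n d k' (j + 1) := fun k' => by
    rw [← Ymod_natCast (by omega) hj, Nat.cast_succ]
  rw [liftYmod_X hk1 hk hj1 hj, T, X_of hk1 hk hj1 hj, FreeGroup.lift_apply_of]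
  simp only [Nat.sub_add_cancel hk1, Nat.sub_add_cancel hj1, prod_X_add_two hj1]
  rw [← X_of hk1 hk hj1 hj]
  split_ifs <;>
    simp only [hY, hY', X_eq_Ymod, Nat.cast_add, Nat.cast_one, Ymod_one, one_add_one_eq_two] <;>
    group

def Tinv (n d i : ℕ) : Fgrp n d →* Fgrp n d := liftYmod fun k e =>
  if k + 1 = i then Ymod n d i e * Ymod n d k e
  else if k = i then Ymod n d i 0 * (Ymod n d i (e - 1))⁻¹
  else if k = i + 1 then Ymod n d k e * Ymod n d i (e - 1) * (Ymod n d i 0)⁻¹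
  else Ymod n d k e

section
variable [NeZero d] {i : ℕ} (e : ZMod d)

theorem T_Ymod_pred (hk1 : 1 ≤ k) (hki : k + 1 = i) (hi : i ≤ n - 1) :
    T n d i (Ymod n d k e) = (Ymod n d i 2)⁻¹ * Ymod n d i (e + 1) * Ymod n d k e := by
  rw [T_eq_liftYmod, liftYmod_Ymod (by simp [hki, Ymod_one, one_add_one_eq_two]) hk1 (by omega)]
  exact if_pos hki

theorem T_Ymod_self (hi1 : 1 ≤ i) (hi : i ≤ n - 1) :
    T n d i (Ymod n d i e) = (Ymod n d i (e + 1))⁻¹ * Ymod n d i 2 := by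
  rw [T_eq_liftYmod, liftYmod_Ymod (by simp [one_add_one_eq_two]) hi1 hi]
  simp

theorem T_Ymod_succ (hki : k = i + 1) (hk : k ≤ n - 1) :
    T n d i (Ymod n d k e) = Ymod n d k e * Ymod n d i e := by
  subst hki
  have h : i + 1 + 1 ≠ i := by omega
  rw [T_eq_liftYmod, liftYmod_Ymod (by simp [h, Ymod_one]) le_add_self hk]
  simp [h]

theorem T_Ymod_far (hk1 : 1 ≤ k) (hk : k ≤ n - 1) (hki : k + 1 < i ∨ i + 1 < k) :
    T n d i (Ymod n d k e) = Ymod n d k e := by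
  have h1 : k + 1 ≠ i := by omega
  have h2 : k ≠ i := by omega
  have h3 : k ≠ i + 1 := by omega
  rw [T_eq_liftYmod, liftYmod_Ymod (by simp [h1, h2, h3, Ymod_one]) hk1 hk]
  simp [h1, h2, h3]

theorem Tinv_Ymod_pred (hk1 : 1 ≤ k) (hki : k + 1 = i) (hi : i ≤ n - 1) :
    Tinv n d i (Ymod n d k e) = Ymod n d i e * Ymod n d k e := by
  rw [Tinv, liftYmod_Ymod (by simp [hki, Ymod_one]) hk1 (by omega)]
  exact if_pos hki

theorem Tinv_Ymod_self (hi1 : 1 ≤ i) (hi : i ≤ n - 1) :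
    Tinv n d i (Ymod n d i e) = Ymod n d i 0 * (Ymod n d i (e - 1))⁻¹ := by
  rw [Tinv, liftYmod_Ymod (by simp) hi1 hi]
  simp

theorem Tinv_Ymod_succ (hki : k = i + 1) (hk : k ≤ n - 1) :
    Tinv n d i (Ymod n d k e) = Ymod n d k e * Ymod n d i (e - 1) * (Ymod n d i 0)⁻¹ := by
  subst hki
  have h : i + 1 + 1 ≠ i := by omega
  rw [Tinv, liftYmod_Ymod (by simp [h, Ymod_one]) le_add_self hk]
  simp [h]

theorem Tinv_Ymod_far (hk1 : 1 ≤ k) (hk : k ≤ n - 1) (hki : k + 1 < i ∨ i + 1 < k) :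
    Tinv n d i (Ymod n d k e) = Ymod n d k e := by
  have h1 : k + 1 ≠ i := by omega
  have h2 : k ≠ i := by omega
  have h3 : k ≠ i + 1 := by omega
  rw [Tinv, liftYmod_Ymod (by simp [h1, h2, h3, Ymod_one]) hk1 hk]
  simp [h1, h2, h3]

theorem Tinv_comp_T (hi1 : 1 ≤ i) (hi : i ≤ n - 1) :
    (Tinv n d i).comp (T n d i) = MonoidHom.id _ := by
  have h21 : (2 : ZMod d) - 1 = 1 := by norm_num
  refine hom_ext_Ymod fun k hk1 hk e => ?_
  obtain rfl | rfl | rfl | hfar : k + 1 = i ∨ k = i ∨ k = i + 1 ∨ (k + 1 < i ∨ i + 1 < k) := by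
    omega
  all_goals
    simp (disch := omega) only [MonoidHom.comp_apply, MonoidHom.id_apply, map_mul, map_inv,
      T_Ymod_pred, T_Ymod_self, T_Ymod_succ, T_Ymod_far, Tinv_Ymod_pred, Tinv_Ymod_self,
      Tinv_Ymod_succ, Tinv_Ymod_far, add_sub_cancel_right, h21, Ymod_one]
  all_goals group

theorem T_comp_Tinv (hi1 : 1 ≤ i) (hi : i ≤ n - 1) :
    (T n d i).comp (Tinv n d i) = MonoidHom.id _ := by
  refine hom_ext_Ymod fun k hk1 hk e => ?_
  obtain rfl | rfl | rfl | hfar : k + 1 = i ∨ k = i ∨ k = i + 1 ∨ (k + 1 < i ∨ i + 1 < k) := by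
    omega
  all_goals
    simp (disch := omega) only [MonoidHom.comp_apply, MonoidHom.id_apply, map_mul, map_inv,
      T_Ymod_pred, T_Ymod_self, T_Ymod_succ, T_Ymod_far, Tinv_Ymod_pred, Tinv_Ymod_self,
      Tinv_Ymod_succ, Tinv_Ymod_far, sub_add_cancel, zero_add, Ymod_one]
  all_goals group

theorem T_braid (hi1 : 1 ≤ i) (hi : i + 1 ≤ n - 1) :
    (T n d i).comp ((T n d (i + 1)).comp (T n d i)) =
      (T n d (i + 1)).comp ((T n d i).comp (T n d (i + 1))) := by
  refine hom_ext_Ymod fun k hk1 hk e => ?_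
  obtain rfl | rfl | rfl | rfl | hfar :
      k + 1 = i ∨ k = i ∨ k = i + 1 ∨ k = i + 2 ∨ (k + 1 < i ∨ i + 2 < k) := by
    omega
  all_goals
    simp (disch := omega) only [MonoidHom.comp_apply, map_mul, map_inv,
      T_Ymod_pred, T_Ymod_self, T_Ymod_succ, T_Ymod_far]
  all_goals group

theorem T_comm {j : ℕ} (hi1 : 1 ≤ i) (hij : i + 2 ≤ j) (hj : j ≤ n - 1) :
    (T n d i).comp (T n d j) = (T n d j).comp (T n d i) := by
  refine hom_ext_Ymod fun k hk1 hk e => ?_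
  obtain rfl | rfl | ⟨rfl, rfl⟩ | ⟨rfl, hkj⟩ | ⟨rfl, hik⟩ | rfl | rfl | hfar :
      k + 1 = i ∨ k = i ∨ (k = i + 1 ∧ k + 1 = j) ∨ (k = i + 1 ∧ k + 1 < j) ∨
        (k + 1 = j ∧ i + 1 < k) ∨ k = j ∨ k = j + 1 ∨
        (k + 1 < i ∨ i + 1 < k) ∧ (k + 1 < j ∨ j + 1 < k) := by
    omega
  all_goals
    simp (disch := omega) only [MonoidHom.comp_apply, map_mul, map_inv,
      T_Ymod_pred, T_Ymod_self, T_Ymod_succ, T_Ymod_far]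
  all_goals group

end

theorem exists_hom_braidGroup {G : Type*} [Group G] (τ : Fin (n - 1) → G)
    (hbraid : ∀ a b : Fin (n - 1), (a : ℕ) + 1 = b → τ a * τ b * τ a = τ b * τ a * τ b)
    (hcomm : ∀ a b : Fin (n - 1), (a : ℕ) + 2 ≤ b → τ a * τ b = τ b * τ a) :
    ∃ φ : BraidGroup n →* G, ∀ a, φ (PresentedGroup.of a) = τ a := by
  refine ⟨PresentedGroup.toGroup (f := τ) ?_, fun a => PresentedGroup.toGroup.of _⟩
  rintro r (⟨a, b, hab, rfl⟩ | ⟨a, b, hab, rfl⟩) <;>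
    simp only [map_mul, map_inv, FreeGroup.lift_apply_of, mul_inv_eq_one]
  exacts [hbraid a b hab, hcomm a b hab]

end BraidRep

theorem exists_braid_representation_free_general (n d : ℕ) (hd : 2 ≤ d) :
    ∃ φ : BraidGroup n →* MulAut (Fgrp n d),
      ∀ (i : ℕ), 1 ≤ i → i ≤ n - 1 → ∀ (h : i - 1 < n - 1) (x : Fgrp n d),
        φ (PresentedGroup.of (rels := braidRels (n - 1)) ⟨i - 1, h⟩) x =
          T n d i x := by
  have : NeZero d := ⟨by omega⟩
  let τ : Fin (n - 1) → MulAut (Fgrp n d) := fun a =>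
    (T n d (a + 1)).toMulEquiv (BraidRep.Tinv n d (a + 1))
      (BraidRep.Tinv_comp_T le_add_self a.isLt) (BraidRep.T_comp_Tinv le_add_self a.isLt)
  have hτ : ∀ a x, τ a x = T n d (a + 1) x := fun _ _ => rfl
  obtain ⟨φ, hφ⟩ := BraidRep.exists_hom_braidGroup τ
    (fun a b hab => MulEquiv.ext fun x => by
      simpa [hτ, ← hab] using
        DFunLike.congr_fun (BraidRep.T_braid (i := a + 1) le_add_self (hab ▸ b.isLt)) x)
    (fun a b hab => MulEquiv.ext fun x => by
      simpa [hτ] using DFunLike.congr_fun (BraidRep.T_comm le_add_self (by omega) b.isLt) x)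
  refine ⟨φ, fun i hi1 _ _ x => ?_⟩
  rw [hφ, hτ, Nat.sub_add_cancel hi1]

/-- There is a group homomorphism `φ_d : B_n → Aut(F)` of the braid group into
the automorphism group of the free group `F` of rank `(d−1)(n−1)` sending each
braid generator `σ_i` (for `i = 1, …, n−1`) to the automorphism `T_i`. -/
theorem exists_braid_representation_free (n d : ℕ) (hn : 2 ≤ n) (hd : 2 ≤ d) :
    ∃ φ : BraidGroup n →* MulAut (Fgrp n d),
      ∀ (i : ℕ), 1 ≤ i → i ≤ n - 1 → ∀ (h : i - 1 < n - 1) (x : Fgrp n d),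
        φ (PresentedGroup.of (rels := braidRels (n - 1)) ⟨i - 1, h⟩) x =
          T n d i x :=
  exists_braid_representation_free_general n d hd
end

section
/- The homomorphism ι : F → E is injective; equivalently, the (d−1)(n−1) elements p_k·e_{k,j}·e_{k,j+1}^{−1}·p_k^{−1} of E (for k = 1,…,n−1 and j = 1,…,d−1) freely generate a free subgroup of E of rank (d−1)(n−1). -/
/-- The path `p_k := e_{0,1}·e_{1,1}·…·e_{k−1,1}` in `E`. -/
def pathP (n d k : ℕ) : Egrp n d :=
  ((List.range k).map fun t => FreeGroup.of ((Fin.ofNat (n + 1) (t : ℕ)), (1 : ZMod d))).prod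

/-- The homomorphism `ι : F → E` determined on generators by
`ι(x_{k,j}) = p_k·e_{k,j}·e_{k,j+1}⁻¹·p_k⁻¹`. -/
def iota (n d : ℕ) : Fgrp n d →* Egrp n d :=
  FreeGroup.lift fun p =>
    let k := (p.1 : ℕ) + 1
    let j := (p.2 : ℕ) + 1
    pathP n d k * eGen n d k (j : ZMod d) * (eGen n d k ((j : ZMod d) + 1))⁻¹ *
      (pathP n d k)⁻¹

/-!
`ι` has a left inverse `π : E → F`, given by `π(e_{0,j}) = 1` and `π(e_{k,j}) = y_{k,j}⁻¹`
for `k ≥ 1`, with `j` represented in `{1, …, d}`. Since `y_{k,1} = 1`, `π` kills every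
`e_{k,1}` and hence every path `p_k`, and `π(e_{k,j} e_{k,j+1}⁻¹) = y_{k,j}⁻¹ y_{k,j+1} = x_{k,j}`.
-/

namespace Iota

variable {n d : ℕ}

def posRep (j : ZMod d) : ℕ := if j.val = 0 then d else j.val

theorem posRep_natCast {m : ℕ} (hm : 0 < m) (hmd : m ≤ d) : posRep (m : ZMod d) = m := by
  rcases hmd.lt_or_eq with hlt | rfl
  · rw [posRep, ZMod.val_natCast_of_lt hlt, if_neg hm.ne']
  · rw [posRep, ZMod.natCast_self, ZMod.val_zero, if_pos rfl]

theorem Y_one (k : ℕ) : Y n d k 1 = 1 := by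
  simp [Y]

theorem Y_succ (k : ℕ) {j : ℕ} (hj : 1 ≤ j) : Y n d k (j + 1) = Y n d k j * X n d k j := by
  obtain ⟨m, rfl⟩ : ∃ m, j = m + 1 := ⟨j - 1, by omega⟩
  simp [Y, List.range_succ]

theorem X_succ_succ (i : Fin (n - 1)) (b : Fin (d - 1)) :
    X n d (i + 1) (b + 1) = FreeGroup.of (i, b) := by
  have hb : (b : ℕ) + 1 < d := by omega
  rw [X, dif_pos (by omega), Nat.mod_eq_of_lt hb, if_neg (by omega), dif_pos (by omega)]
  rfl

variable (n d) in
def retraction : Egrp n d →* Fgrp n d :=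
  FreeGroup.lift fun q => if (q.1 : ℕ) = 0 then 1 else (Y n d q.1 (posRep q.2))⁻¹

theorem retraction_eGen {k : ℕ} (hk : 0 < k) (hkn : k ≤ n) (j : ZMod d) :
    retraction n d (eGen n d k j) = (Y n d k (posRep j))⁻¹ := by
  have hval : ((Fin.ofNat (n + 1) k : Fin (n + 1)) : ℕ) = k := by
    simp [Nat.mod_eq_of_lt (Nat.lt_succ_of_le hkn)]
  rw [eGen, retraction, FreeGroup.lift_apply_of, hval, if_neg hk.ne']

theorem retraction_of_one (hd : 0 < d) (q : Fin (n + 1)) :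
    retraction n d (FreeGroup.of (q, 1)) = 1 := by
  have hrep : posRep (1 : ZMod d) = 1 := by exact_mod_cast posRep_natCast one_pos hd
  rw [retraction, FreeGroup.lift_apply_of]
  split_ifs
  · rfl
  · rw [hrep, Y_one, inv_one]

theorem retraction_pathP (hd : 0 < d) (k : ℕ) : retraction n d (pathP n d k) = 1 := by
  rw [pathP, map_list_prod, List.map_map]
  exact List.prod_eq_one fun x hx => by
    obtain ⟨t, -, rfl⟩ := List.mem_map.mp hx
    exact retraction_of_one hd _

theorem retraction_comp_iota : (retraction n d).comp (iota n d) = MonoidHom.id _ := by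
  ext ⟨i, b⟩
  have hb : (b : ℕ) + 1 < d := by omega
  have hi : (i : ℕ) + 1 ≤ n := by omega
  have hrep : posRep ((((b : ℕ) + 1 : ℕ) : ZMod d) + 1) = (b : ℕ) + 1 + 1 := by
    exact_mod_cast posRep_natCast (d := d) (m := (b : ℕ) + 1 + 1) (by omega) hb
  simp only [MonoidHom.comp_apply, MonoidHom.id_apply, iota, FreeGroup.lift_apply_of, map_mul,
    map_inv, retraction_pathP (by omega : 0 < d), retraction_eGen (Nat.succ_pos _) hi,
    posRep_natCast (Nat.succ_pos _) hb.le, hrep, Y_succ _ (Nat.le_add_left 1 _), X_succ_succ]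
  group

end Iota

theorem iota_injective_general (n d : ℕ) :
    Function.Injective (iota n d) :=
  Function.LeftInverse.injective (g := Iota.retraction n d)
    (DFunLike.congr_fun Iota.retraction_comp_iota)

/-- The homomorphism `ι : F → E` is injective; equivalently, the `(d−1)(n−1)`
elements `p_k·e_{k,j}·e_{k,j+1}⁻¹·p_k⁻¹` of `E` (for `k = 1,…,n−1` and
`j = 1,…,d−1`) freely generate a free subgroup of `E` of rank `(d−1)(n−1)`. -/
theorem iota_injective (n d : ℕ) (hn : 2 ≤ n) (hd : 2 ≤ d) :
    Function.Injective (iota n d) :=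
  iota_injective_general n d
end
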